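/- arXiv:1801.09021 — 2 statements merged into one kernel-verified Lean document; each statement's English description precedes it below -/
import Mathlib

section
/- Let θ be a categorical distribution on a finite nonempty set X and define f : ℝ → ℝ by f(α) := (1/(1−α))·log(∑_{x∈X} θ(x)^α) for α ≠ 1 and f(1) := H(θ). Then (i) for every α₀ ≠ 1, f is differentiable at α₀ with derivative −D(T(θ,α₀)||θ)/(1−α₀)²; and (ii) f is differentiable at α₀ = 1 with derivative −V(θ)/2. -/
/-!
Put `g α = log ∑ θ(x)^α`. Since `g 1 = 0`, the function `f` is `-dslope g 1`: minus the
difference quotient of `g` at `1`, extended at `1` by `g'(1) = -H(θ)`. Away from `1`, `g'(α)` is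
the mean of `log θ` under the tilt `T(θ,α)`, and the quotient rule turns `(α - 1) g'(α) - g(α)`
into `D(T(θ,α)‖θ)`. At `1`, the difference quotient of `g` has derivative `g''(1) / 2`
(L'Hôpital), and `g''(1)` is the variance of `log θ` under `θ`, i.e. `V(θ)`.
-/

open Real BigOperators
open scoped Classical

variable {X : Type*}

/-- A categorical distribution on a finite set: positive everywhere and sums to 1. -/
def IsCatDist [Fintype X] (θ : X → ℝ) : Prop :=
  (∀ x, 0 < θ x) ∧ ∑ x, θ x = 1

/-- The tilt of order `α` of a categorical distribution. -/
noncomputable def tilt [Fintype X] (θ : X → ℝ) (α : ℝ) : X → ℝ :=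
  fun x => θ x ^ α / ∑ y, θ y ^ α

/-- Shannon entropy (natural log). -/
noncomputable def shannonEntropy [Fintype X] (ρ : X → ℝ) : ℝ :=
  ∑ x, ρ x * Real.log (1 / ρ x)

/-- Cross entropy `H(ρ‖θ)`. -/
noncomputable def crossEntropy [Fintype X] (ρ θ : X → ℝ) : ℝ :=
  ∑ x, ρ x * Real.log (1 / θ x)

/-- Relative entropy (KL divergence) `D(ρ‖θ)`. -/
noncomputable def relEntropy [Fintype X] (ρ θ : X → ℝ) : ℝ :=
  ∑ x, ρ x * Real.log (ρ x / θ x)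

/-- Rényi entropy of order `α`. -/
noncomputable def renyiEntropy [Fintype X] (θ : X → ℝ) (α : ℝ) : ℝ :=
  (1 / (1 - α)) * Real.log (∑ x, θ x ^ α)

/-- Varentropy. -/
noncomputable def varentropy [Fintype X] (ρ : X → ℝ) : ℝ :=
  ∑ x, ρ x * (Real.log (1 / ρ x) - shannonEntropy ρ) ^ 2

/-- Cross varentropy. -/
noncomputable def crossVarentropy [Fintype X] (ρ θ : X → ℝ) : ℝ :=
  ∑ x, ρ x * (Real.log (1 / θ x) - crossEntropy ρ θ) ^ 2

/-- Probability of an `n`-string under the i.i.d. extension of `θ`. -/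
noncomputable def strProb (θ : X → ℝ) {n : ℕ} (x : Fin n → X) : ℝ := ∏ i, θ (x i)

/-- Probability of a set of `n`-strings. -/
noncomputable def setProb [Fintype X] (θ : X → ℝ) {n : ℕ} (S : Finset (Fin n → X)) : ℝ :=
  ∑ x ∈ S, strProb θ x

/-- `θ` has a unique maximizer and a unique minimizer. -/
def UniqueExtremizers [Fintype X] (θ : X → ℝ) : Prop :=
  (∃! x : X, ∀ y, θ y ≤ θ x) ∧ (∃! x : X, ∀ y, θ x ≤ θ y)

/-- Tilted weakly typical set of order `α`. -/
noncomputable def typicalSetA [Fintype X] (θ : X → ℝ) (α : ℝ) (n : ℕ) (ε : ℝ) :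
    Finset (Fin n → X) :=
  Finset.univ.filter (fun x =>
    Real.exp (-(n : ℝ) * crossEntropy (tilt θ α) θ - n * ε) < strProb θ x ∧
    strProb θ x < Real.exp (-(n : ℝ) * crossEntropy (tilt θ α) θ + n * ε))

/-- The set `D^n_{θ,α,ε}`. -/
noncomputable def setD [Fintype X] (θ : X → ℝ) (α : ℝ) (n : ℕ) (ε : ℝ) :
    Finset (Fin n → X) :=
  Finset.univ.filter (fun x =>
    strProb (tilt θ α) x > Real.exp (-(n : ℝ) * shannonEntropy (tilt θ α) - n * |α| * ε))

/-- The set `E^n_{θ,α,ε}`. -/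
noncomputable def setE [Fintype X] (θ : X → ℝ) (α : ℝ) (n : ℕ) (ε : ℝ) :
    Finset (Fin n → X) :=
  Finset.univ.filter (fun x =>
    strProb (tilt θ α) x < Real.exp (-(n : ℝ) * shannonEntropy (tilt θ α) + n * |α| * ε))

/-- A guesswork function for `θ` on `n`-strings: a bijection onto `{1,…,|X|^n}`
that orders strings from most likely to least likely. -/
def IsGuesswork [Fintype X] (θ : X → ℝ) {n : ℕ} (G : (Fin n → X) → ℕ) : Prop :=
  Function.Injective G ∧
  (∀ x, G x ∈ Finset.Icc 1 (Fintype.card X ^ n)) ∧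
  (∀ m ∈ Finset.Icc 1 (Fintype.card X ^ n), ∃ x, G x = m) ∧
  (∀ x y, strProb θ x > strProb θ y → G x < G y)

open Filter Topology

theorem HasDerivAt.dslope_of_ne {𝕜 E : Type*} [NontriviallyNormedField 𝕜] [NormedAddCommGroup E]
    [NormedSpace 𝕜 E] {f : 𝕜 → E} {f' : E} {a b : 𝕜} (hf : HasDerivAt f f' b) (h : b ≠ a) :
    HasDerivAt (dslope f a) ((b - a)⁻¹ • (f' - slope f a b)) b := by
  have := (((hasDerivAt_id b).sub_const a).inv (sub_ne_zero.2 h)).smul (hf.sub_const (f a))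
  refine (this.congr_of_eventuallyEq (dslope_eventuallyEq_slope_of_ne f h)).congr_deriv ?_
  simp only [Pi.inv_apply, id_eq, slope_def_module, div_eq_mul_inv, ← inv_pow]
  module

theorem hasDerivAt_dslope_same {f f' : ℝ → ℝ} {a f'' : ℝ}
    (hf : ∀ᶠ x in 𝓝 a, HasDerivAt f (f' x) x) (hf' : HasDerivAt f' f'' a) :
    HasDerivAt (dslope f a) (f'' / 2) a := by
  have hfa : HasDerivAt f (f' a) a := hf.self_of_nhds
  have hnum : ∀ᶠ x in 𝓝 a, HasDerivAt (fun x => f x - f a - f' a * (x - a)) (f' x - f' a) x := by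
    filter_upwards [hf] with x hx
    simpa using (hx.sub_const (f a)).fun_sub (((hasDerivAt_id x).sub_const a).const_mul (f' a))
  have hden : ∀ x, HasDerivAt (fun x => (x - a) ^ 2) (2 * (x - a)) x := by
    intro x
    simpa using ((hasDerivAt_id x).sub_const a).fun_pow 2
  have hquot : Tendsto (fun x => (f x - f a - f' a * (x - a)) / (x - a) ^ 2) (𝓝[≠] a)
      (𝓝 (f'' / 2)) := by
    refine HasDerivAt.lhopital_zero_nhdsNE (nhdsWithin_le_nhds hnum)
      (Eventually.of_forall hden) ?_ ?_ ?_ ?_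
    · filter_upwards [self_mem_nhdsWithin] with x hx
      exact mul_ne_zero two_ne_zero (sub_ne_zero.2 hx)
    · simpa using ((hnum.self_of_nhds.continuousAt).tendsto).mono_left nhdsWithin_le_nhds
    · simpa using ((hden a).continuousAt.tendsto).mono_left nhdsWithin_le_nhds
    · refine ((hasDerivAt_iff_tendsto_slope.1 hf').div_const 2).congr' ?_
      filter_upwards [self_mem_nhdsWithin] with x hx
      rw [slope_def_field]
      field_simp [sub_ne_zero.2 hx]
  rw [hasDerivAt_iff_tendsto_slope]
  refine hquot.congr' ?_
  filter_upwards [self_mem_nhdsWithin] with x hx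
  rw [slope_def_field, dslope_same, dslope_of_ne _ hx, hfa.deriv, slope_def_field]
  field_simp [sub_ne_zero.2 hx]

section
variable [Fintype X]

theorem shannonEntropy_eq_neg_sum (ρ : X → ℝ) : shannonEntropy ρ = -∑ x, ρ x * log (ρ x) := by
  simp [shannonEntropy, Finset.sum_neg_distrib]

theorem varentropy_eq_sum_mul_log_sq_sub {ρ : X → ℝ} (hρ : ∑ x, ρ x = 1) :
    varentropy ρ = ∑ x, ρ x * log (ρ x) ^ 2 - shannonEntropy ρ ^ 2 := by
  have hexpand : ∀ x, ρ x * (log (1 / ρ x) - shannonEntropy ρ) ^ 2 = ρ x * log (ρ x) ^ 2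
      + 2 * shannonEntropy ρ * (ρ x * log (ρ x)) + shannonEntropy ρ ^ 2 * ρ x := by
    intro x
    rw [one_div, log_inv]
    ring
  rw [varentropy, Finset.sum_congr rfl fun x _ => hexpand x, Finset.sum_add_distrib,
    Finset.sum_add_distrib, ← Finset.mul_sum, ← Finset.mul_sum, hρ, shannonEntropy_eq_neg_sum]
  ring

variable {θ : X → ℝ}

theorem hasDerivAt_sum_rpow_mul_log_pow (hθ : ∀ x, 0 < θ x) (k : ℕ) (a : ℝ) :
    HasDerivAt (fun a => ∑ x, θ x ^ a * log (θ x) ^ k)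
      (∑ x, θ x ^ a * log (θ x) ^ (k + 1)) a :=
  HasDerivAt.fun_sum fun x _ => by
    simpa [pow_succ, mul_assoc, mul_comm] using
      (hasStrictDerivAt_const_rpow (hθ x) a).hasDerivAt.mul_const (log (θ x) ^ k)

theorem hasDerivAt_sum_rpow (hθ : ∀ x, 0 < θ x) (a : ℝ) :
    HasDerivAt (fun a => ∑ x, θ x ^ a) (∑ x, θ x ^ a * log (θ x)) a := by
  simpa using hasDerivAt_sum_rpow_mul_log_pow hθ 0 a

variable [Nonempty X]

theorem sum_rpow_pos (hθ : ∀ x, 0 < θ x) (a : ℝ) : 0 < ∑ x, θ x ^ a :=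
  Finset.sum_pos (fun x _ => rpow_pos_of_pos (hθ x) a) Finset.univ_nonempty

theorem hasDerivAt_log_sum_rpow (hθ : ∀ x, 0 < θ x) (a : ℝ) :
    HasDerivAt (fun a => log (∑ x, θ x ^ a)) ((∑ x, θ x ^ a * log (θ x)) / ∑ x, θ x ^ a) a :=
  (hasDerivAt_sum_rpow hθ a).log (sum_rpow_pos hθ a).ne'

theorem hasDerivAt_sum_rpow_mul_log_div_sum_rpow (hθ : ∀ x, 0 < θ x) (a : ℝ) :
    HasDerivAt (fun a => (∑ x, θ x ^ a * log (θ x)) / ∑ x, θ x ^ a)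
      ((∑ x, θ x ^ a * log (θ x) ^ 2) / (∑ x, θ x ^ a)
        - ((∑ x, θ x ^ a * log (θ x)) / ∑ x, θ x ^ a) ^ 2) a := by
  have hZ := sum_rpow_pos hθ a
  have := (hasDerivAt_sum_rpow_mul_log_pow hθ 1 a).fun_div (hasDerivAt_sum_rpow hθ a) hZ.ne'
  simp only [pow_one] at this
  refine this.congr_deriv ?_
  field_simp

theorem relEntropy_tilt (hθ : ∀ x, 0 < θ x) (a : ℝ) :
    relEntropy (tilt θ a) θ
      = (a - 1) * ((∑ x, θ x ^ a * log (θ x)) / ∑ x, θ x ^ a) - log (∑ x, θ x ^ a) := by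
  have hZ := sum_rpow_pos hθ a
  have hterm : ∀ x, tilt θ a x * log (tilt θ a x / θ x)
      = ((a - 1) * (θ x ^ a * log (θ x)) - log (∑ y, θ y ^ a) * θ x ^ a) / ∑ y, θ y ^ a := by
    intro x
    have hθa := rpow_pos_of_pos (hθ x) a
    rw [tilt, log_div (div_pos hθa hZ).ne' (hθ x).ne', log_div hθa.ne' hZ.ne', log_rpow (hθ x)]
    ring
  rw [relEntropy, Finset.sum_congr rfl fun x _ => hterm x, ← Finset.sum_div,
    Finset.sum_sub_distrib, ← Finset.mul_sum, ← Finset.mul_sum]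
  field_simp

end

theorem hasDerivAt_renyi_extended_general [Fintype X] (θ : X → ℝ)
    (hθ : IsCatDist θ) (f : ℝ → ℝ)
    (hf : ∀ α : ℝ, α ≠ 1 → f α = (1 / (1 - α)) * Real.log (∑ x, θ x ^ α))
    (hf1 : f 1 = shannonEntropy θ) :
    (∀ α₀ : ℝ, α₀ ≠ 1 →
      HasDerivAt f (-(relEntropy (tilt θ α₀) θ) / (1 - α₀) ^ 2) α₀) ∧
    HasDerivAt f (-(varentropy θ) / 2) 1 := by
  obtain ⟨hpos, hsum⟩ := hθ
  have : Nonempty X :=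
    Finset.univ_nonempty_iff.1 (Finset.nonempty_of_sum_ne_zero (hsum ▸ one_ne_zero))
  have hlog_one : log (∑ x, θ x ^ (1 : ℝ)) = 0 := by simp [hsum]
  have hf_eq : f = -dslope (fun a => log (∑ x, θ x ^ a)) 1 := by
    funext a
    rcases eq_or_ne a 1 with rfl | ha
    · simp [hf1, (hasDerivAt_log_sum_rpow hpos 1).deriv, hsum, shannonEntropy_eq_neg_sum]
    · have ha₁ : a - 1 ≠ 0 := sub_ne_zero.2 ha
      rw [hf a ha, Pi.neg_apply, dslope_of_ne _ ha, slope_def_field, hlog_one]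
      field_simp
      ring
  subst hf_eq
  refine ⟨fun α₀ hα₀ => ?_, ?_⟩
  · refine ((hasDerivAt_log_sum_rpow hpos α₀).dslope_of_ne hα₀).neg.congr_deriv ?_
    have hα₀₁ : α₀ - 1 ≠ 0 := sub_ne_zero.2 hα₀
    rw [relEntropy_tilt hpos, slope_def_field, hlog_one, smul_eq_mul]
    field_simp
    ring
  · refine (hasDerivAt_dslope_same (Eventually.of_forall (hasDerivAt_log_sum_rpow hpos))
      (hasDerivAt_sum_rpow_mul_log_div_sum_rpow hpos 1)).neg.congr_deriv ?_
    simp only [rpow_one, hsum, div_one, varentropy_eq_sum_mul_log_sq_sub hsum,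
      shannonEntropy_eq_neg_sum]
    ring

theorem hasDerivAt_renyi_extended [Fintype X] [Nonempty X] (θ : X → ℝ)
    (hθ : IsCatDist θ) (f : ℝ → ℝ)
    (hf : ∀ α : ℝ, α ≠ 1 → f α = (1 / (1 - α)) * Real.log (∑ x, θ x ^ α))
    (hf1 : f 1 = shannonEntropy θ) :
    (∀ α₀ : ℝ, α₀ ≠ 1 →
      HasDerivAt f (-(relEntropy (tilt θ α₀) θ) / (1 - α₀) ^ 2) α₀) ∧
    HasDerivAt f (-(varentropy θ) / 2) 1 :=
  hasDerivAt_renyi_extended_general θ hθ f hf hf1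
end

section
/- Let θ be a categorical distribution on a finite nonempty set X, let n ≥ 1, ε > 0, and let α satisfy α < 0 or α ≥ 1. Then: (i) P_θ(A^n_{θ,α,ε}) ≥ (1 − V(T(θ,α)||θ)/(n·ε²))·exp(−n·D(T(θ,α)||θ) − |1−α|·n·ε); (ii) P_θ(A^n_{θ,α,ε}) ≤ P_θ(D^n_{θ,α,ε}) ≤ exp(−n·D(T(θ,α)||θ) + |1−α|·n·ε); and (iii) P_θ(E^n_{θ,α,ε}) ≥ 1 − exp(−n·D(T(θ,α)||θ) + |1−α|·n·ε). -/
open Real BigOperators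
open scoped Classical

variable {X : Type*}

/-!
Write `ρ = tilt θ α` and `w = infoDeviation ρ θ`, so that `w xⁿ = log (1 / θⁿ xⁿ) - n H(ρ‖θ)`.
Since `log ρ = α log θ - log ∑ θ ^ α`, one has the change of measure
`θⁿ xⁿ = ρⁿ xⁿ · exp (-n D(ρ‖θ) - (1 - α) w xⁿ)`, and the sets `A`, `D`, `E` are the sets where
`|w| < nε`, `α w < |α| nε` and `-|α| nε < α w`. On `A` the exponent is within `|1 - α| nε` of
`-n D(ρ‖θ)`, and Chebyshev's inequality under `ρⁿ`, for which `w` is a sum of `n` i.i.d. centred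
terms of variance `V(ρ‖θ)`, gives `ρⁿ(A) ≥ 1 - V(ρ‖θ) / (n ε²)`. For `α < 0` or `α ≥ 1` the
factors `α` and `1 - α` have opposite signs, so `α w ≤ |α| nε` forces `(1 - α) w ≥ -|1 - α| nε`;
this bounds `θⁿ` by `exp (-n D(ρ‖θ) + |1 - α| nε) · ρⁿ` on `D` and off `E`.
-/

lemma one_sub_sum_mul_sq_div_le_sum_abs_lt {ι : Type*} [Fintype ι] {p f : ι → ℝ}
    (hp : ∀ i, 0 ≤ p i) (hp₁ : ∑ i, p i = 1) {c : ℝ} (hc : 0 < c) :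
    1 - (∑ i, p i * f i ^ 2) / c ^ 2 ≤ ∑ i with |f i| < c, p i := by
  have htail : ∑ i with ¬|f i| < c, p i ≤ (∑ i, p i * f i ^ 2) / c ^ 2 := by
    rw [le_div_iff₀ (by positivity), Finset.sum_mul]
    calc ∑ i with ¬|f i| < c, p i * c ^ 2
        ≤ ∑ i with ¬|f i| < c, p i * f i ^ 2 := Finset.sum_le_sum fun i hi => by
          have hcf : c ≤ |f i| := not_lt.1 (Finset.mem_filter.1 hi).2
          exact mul_le_mul_of_nonneg_left (sq_abs (f i) ▸ pow_le_pow_left₀ hc.le hcf 2) (hp i)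
      _ ≤ ∑ i, p i * f i ^ 2 := Finset.sum_le_sum_of_subset_of_nonneg (Finset.filter_subset _ _)
          fun i _ _ => mul_nonneg (hp i) (sq_nonneg _)
  have hsplit := Finset.sum_filter_add_sum_filter_not Finset.univ (fun i => |f i| < c) p
  linarith

section Strings

variable {ρ : X → ℝ}

lemma strProb_pos (hρ : ∀ x, 0 < ρ x) {n : ℕ} (x : Fin n → X) : 0 < strProb ρ x :=
  Finset.prod_pos fun i _ => hρ (x i)

lemma log_strProb (hρ : ∀ x, 0 < ρ x) {n : ℕ} (x : Fin n → X) :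
    Real.log (strProb ρ x) = ∑ i, Real.log (ρ (x i)) :=
  Real.log_prod fun i _ => (hρ (x i)).ne'

lemma sum_strProb [Fintype X] (hρ : ∑ x, ρ x = 1) (n : ℕ) : ∑ x : Fin n → X, strProb ρ x = 1 := by
  simp only [strProb, ← Fintype.prod_sum, hρ, Finset.prod_const_one]

lemma sum_strProb_mul_succ [Fintype X] {n : ℕ} (F : (Fin (n + 1) → X) → ℝ) :
    ∑ x, strProb ρ x * F x = ∑ a, ρ a * ∑ y : Fin n → X, strProb ρ y * F (Fin.cons a y) := by
  rw [← (Fin.consEquiv fun _ => X).sum_comp, Fintype.sum_prod_type]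
  simp only [strProb, Fin.prod_univ_succ, mul_assoc, Finset.mul_sum]
  rfl

lemma setProb_le_one [Fintype X] (hρ₀ : ∀ x, 0 ≤ ρ x) (hρ : ∑ x, ρ x = 1) {n : ℕ}
    (S : Finset (Fin n → X)) : setProb ρ S ≤ 1 :=
  (Finset.sum_le_sum_of_subset_of_nonneg (Finset.subset_univ S) fun x _ _ =>
    Finset.prod_nonneg fun i _ => hρ₀ (x i)).trans (sum_strProb hρ n).le

lemma setProb_univ_sdiff [Fintype X] (hρ : ∑ x, ρ x = 1) {n : ℕ} (S : Finset (Fin n → X)) :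
    setProb ρ (Finset.univ \ S) = 1 - setProb ρ S := by
  rw [setProb, setProb, eq_sub_iff_add_eq, Finset.sum_sdiff (Finset.subset_univ S),
    sum_strProb hρ]

variable [Fintype X] (hρ : ∑ x, ρ x = 1) {g : X → ℝ} (hg : ∑ a, ρ a * g a = 0)
include hρ hg

lemma sum_strProb_mul_sum_eq_zero (n : ℕ) :
    ∑ x : Fin n → X, strProb ρ x * ∑ i, g (x i) = 0 := by
  induction n with
  | zero => simp
  | succ n ih =>
    have inner (a : X) : ∑ y : Fin n → X, strProb ρ y * (g a + ∑ i, g (y i)) = g a := by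
      simp only [mul_add, Finset.sum_add_distrib, ← Finset.sum_mul, sum_strProb hρ, ih]
      ring
    simp only [sum_strProb_mul_succ, Fin.sum_univ_succ, Fin.cons_zero, Fin.cons_succ, inner, hg]

lemma sum_strProb_mul_sum_sq (n : ℕ) :
    ∑ x : Fin n → X, strProb ρ x * (∑ i, g (x i)) ^ 2 = n * ∑ a, ρ a * g a ^ 2 := by
  induction n with
  | zero => simp
  | succ n ih =>
    have inner (a : X) : ∑ y : Fin n → X, strProb ρ y * (g a + ∑ i, g (y i)) ^ 2
        = g a ^ 2 + n * ∑ a, ρ a * g a ^ 2 := by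
      calc ∑ y : Fin n → X, strProb ρ y * (g a + ∑ i, g (y i)) ^ 2
          = ∑ y : Fin n → X, (g a ^ 2 * strProb ρ y + 2 * g a * (strProb ρ y * ∑ i, g (y i))
              + strProb ρ y * (∑ i, g (y i)) ^ 2) :=
            Finset.sum_congr rfl fun y _ => by ring
        _ = _ := by
          rw [Finset.sum_add_distrib, Finset.sum_add_distrib, ← Finset.mul_sum, ← Finset.mul_sum,
            sum_strProb hρ, sum_strProb_mul_sum_eq_zero hρ hg, ih]
          ring
    simp only [sum_strProb_mul_succ, Fin.sum_univ_succ, Fin.cons_zero, Fin.cons_succ, inner,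
      mul_add, Finset.sum_add_distrib, ← Finset.sum_mul, hρ]
    push_cast
    ring

end Strings

section Entropy

variable [Fintype X] {ρ θ : X → ℝ}

lemma relEntropy_eq_crossEntropy_sub_shannonEntropy (hρ : ∀ x, 0 < ρ x) (hθ : ∀ x, 0 < θ x) :
    relEntropy ρ θ = crossEntropy ρ θ - shannonEntropy ρ := by
  simp only [relEntropy, crossEntropy, shannonEntropy, ← Finset.sum_sub_distrib, ← mul_sub]
  refine Finset.sum_congr rfl fun x _ => ?_
  rw [Real.log_div (hρ x).ne' (hθ x).ne', one_div, one_div, Real.log_inv, Real.log_inv]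
  ring

noncomputable def infoDeviation (ρ θ : X → ℝ) {n : ℕ} (x : Fin n → X) : ℝ :=
  ∑ i, (Real.log (1 / θ (x i)) - crossEntropy ρ θ)

lemma log_strProb_eq_neg_mul_crossEntropy_sub (hθ : ∀ x, 0 < θ x) {n : ℕ} (x : Fin n → X) :
    Real.log (strProb θ x) = -n * crossEntropy ρ θ - infoDeviation ρ θ x := by
  simp only [log_strProb hθ, infoDeviation, Finset.sum_sub_distrib, one_div, Real.log_inv,
    Finset.sum_neg_distrib, Finset.sum_const, Finset.card_univ, Fintype.card_fin, nsmul_eq_mul]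
  ring

lemma sum_strProb_mul_infoDeviation_sq (hρ : ∑ x, ρ x = 1) (n : ℕ) :
    ∑ x : Fin n → X, strProb ρ x * infoDeviation ρ θ x ^ 2 = n * crossVarentropy ρ θ := by
  have hmean : ∑ a, ρ a * (Real.log (1 / θ a) - crossEntropy ρ θ) = 0 := by
    simp only [mul_sub, Finset.sum_sub_distrib, ← Finset.sum_mul, hρ, one_mul, crossEntropy,
      sub_self]
  exact sum_strProb_mul_sum_sq hρ hmean n

end Entropy

section Tilt

variable [Fintype X] [Nonempty X] {θ : X → ℝ} (hθ : ∀ x, 0 < θ x) (α : ℝ)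
include hθ

lemma sum_rpow_pos_s16 : 0 < ∑ y, θ y ^ α :=
  Finset.sum_pos (fun y _ => Real.rpow_pos_of_pos (hθ y) α) Finset.univ_nonempty

lemma tilt_pos (x : X) : 0 < tilt θ α x :=
  div_pos (Real.rpow_pos_of_pos (hθ x) α) (sum_rpow_pos_s16 hθ α)

lemma sum_tilt : ∑ x, tilt θ α x = 1 := by
  simp only [tilt]
  rw [← Finset.sum_div, div_self (sum_rpow_pos_s16 hθ α).ne']

lemma log_tilt (x : X) :
    Real.log (tilt θ α x) = α * Real.log (θ x) - Real.log (∑ y, θ y ^ α) := by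
  rw [tilt, Real.log_div (Real.rpow_pos_of_pos (hθ x) α).ne' (sum_rpow_pos_s16 hθ α).ne',
    Real.log_rpow (hθ x)]

lemma shannonEntropy_tilt :
    shannonEntropy (tilt θ α) = α * crossEntropy (tilt θ α) θ + Real.log (∑ y, θ y ^ α) := by
  have hlog (x : X) : tilt θ α x * Real.log (1 / tilt θ α x) = α * (tilt θ α x *
      Real.log (1 / θ x)) + tilt θ α x * Real.log (∑ y, θ y ^ α) := by
    rw [one_div, one_div, Real.log_inv, Real.log_inv, log_tilt hθ]
    ring
  simp only [shannonEntropy, crossEntropy, hlog, Finset.sum_add_distrib, ← Finset.mul_sum,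
    ← Finset.sum_mul, sum_tilt hθ, one_mul]

lemma log_strProb_tilt {n : ℕ} (x : Fin n → X) :
    Real.log (strProb (tilt θ α) x)
      = -n * shannonEntropy (tilt θ α) - α * infoDeviation (tilt θ α) θ x := by
  rw [log_strProb (tilt_pos hθ α), Finset.sum_congr rfl fun i _ => log_tilt hθ α (x i),
    Finset.sum_sub_distrib, ← Finset.mul_sum, ← log_strProb hθ,
    log_strProb_eq_neg_mul_crossEntropy_sub hθ, shannonEntropy_tilt hθ]
  simp only [Finset.sum_const, Finset.card_univ, Fintype.card_fin, nsmul_eq_mul]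
  ring

lemma strProb_eq_strProb_tilt_mul_exp {n : ℕ} (x : Fin n → X) :
    strProb θ x = strProb (tilt θ α) x *
      Real.exp (-n * relEntropy (tilt θ α) θ - (1 - α) * infoDeviation (tilt θ α) θ x) := by
  rw [← Real.exp_log (strProb_pos hθ x), ← Real.exp_log (strProb_pos (tilt_pos hθ α) x),
    ← Real.exp_add, log_strProb_tilt hθ, log_strProb_eq_neg_mul_crossEntropy_sub hθ,
    relEntropy_eq_crossEntropy_sub_shannonEntropy (tilt_pos hθ α) hθ]
  ring_nf

lemma mem_setD_iff {n : ℕ} {ε : ℝ} (x : Fin n → X) :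
    x ∈ setD θ α n ε ↔ α * infoDeviation (tilt θ α) θ x < |α| * (n * ε) := by
  rw [setD, Finset.mem_filter, gt_iff_lt, ← Real.lt_log_iff_exp_lt (strProb_pos (tilt_pos hθ α) x),
    log_strProb_tilt hθ]
  constructor
  · rintro ⟨-, h⟩; linarith
  · intro h; exact ⟨Finset.mem_univ x, by linarith⟩

lemma mem_setE_iff {n : ℕ} {ε : ℝ} (x : Fin n → X) :
    x ∈ setE θ α n ε ↔ -(|α| * (n * ε)) < α * infoDeviation (tilt θ α) θ x := by
  rw [setE, Finset.mem_filter, ← Real.log_lt_iff_lt_exp (strProb_pos (tilt_pos hθ α) x),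
    log_strProb_tilt hθ]
  constructor
  · rintro ⟨-, h⟩; linarith
  · intro h; exact ⟨Finset.mem_univ x, by linarith⟩

end Tilt

lemma typicalSetA_eq_filter [Fintype X] {θ : X → ℝ} (hθ : ∀ x, 0 < θ x) (α : ℝ) (n : ℕ) (ε : ℝ) :
    typicalSetA θ α n ε = Finset.univ.filter fun x => |infoDeviation (tilt θ α) θ x| < n * ε := by
  refine Finset.filter_congr fun x _ => ?_
  rw [← Real.lt_log_iff_exp_lt (strProb_pos hθ x), ← Real.log_lt_iff_lt_exp (strProb_pos hθ x),
    log_strProb_eq_neg_mul_crossEntropy_sub hθ, abs_lt]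
  constructor <;> rintro ⟨h₁, h₂⟩ <;> constructor <;> linarith

lemma typicalSetA_subset_setD [Fintype X] [Nonempty X] {θ : X → ℝ} (hθ : ∀ x, 0 < θ x) {α : ℝ}
    (hα : α ≠ 0) (n : ℕ) (ε : ℝ) : typicalSetA θ α n ε ⊆ setD θ α n ε := by
  intro x hx
  rw [typicalSetA_eq_filter hθ, Finset.mem_filter] at hx
  rw [mem_setD_iff hθ α x]
  calc α * infoDeviation (tilt θ α) θ x ≤ |α| * |infoDeviation (tilt θ α) θ x| :=
        (le_abs_self _).trans_eq (abs_mul _ _)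
    _ < |α| * (n * ε) := mul_lt_mul_of_pos_left hx.2 (abs_pos.2 hα)

lemma one_sub_crossVarentropy_div_le_setProb_tilt_typicalSetA [Fintype X] [Nonempty X]
    {θ : X → ℝ} (hθ : ∀ x, 0 < θ x) (α : ℝ) {n : ℕ} (hn : 0 < n) {ε : ℝ} (hε : 0 < ε) :
    1 - crossVarentropy (tilt θ α) θ / (n * ε ^ 2) ≤ setProb (tilt θ α) (typicalSetA θ α n ε) := by
  have hcheb := one_sub_sum_mul_sq_div_le_sum_abs_lt (f := infoDeviation (tilt θ α) θ)
    (fun x => (strProb_pos (tilt_pos hθ α) x).le) (sum_strProb (sum_tilt hθ α) n)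
    (mul_pos (Nat.cast_pos.2 hn) hε)
  rw [sum_strProb_mul_infoDeviation_sq (sum_tilt hθ α)] at hcheb
  rw [typicalSetA_eq_filter hθ, setProb]
  convert hcheb using 2
  field_simp

lemma neg_abs_one_sub_mul_le_of_mul_le {α w c : ℝ} (hα : α < 0 ∨ 1 ≤ α) (h : α * w ≤ |α| * c) :
    -(|1 - α| * c) ≤ (1 - α) * w := by
  rcases hα with hα | hα
  · rw [abs_of_neg hα] at h
    rw [abs_of_pos (by linarith : 0 < 1 - α)]
    nlinarith
  · rw [abs_of_pos (by linarith : 0 < α)] at h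
    rw [abs_of_nonpos (by linarith : 1 - α ≤ 0)]
    nlinarith

section ChangeOfMeasure

variable [Fintype X] [Nonempty X] {θ : X → ℝ} (hθ : ∀ x, 0 < θ x) {α : ℝ} {n : ℕ} {ε : ℝ}
include hθ

lemma setProb_le_exp_of_forall_mul_le (hα : α < 0 ∨ 1 ≤ α) {S : Finset (Fin n → X)}
    (hS : ∀ x ∈ S, α * infoDeviation (tilt θ α) θ x ≤ |α| * (n * ε)) :
    setProb θ S ≤ Real.exp (-(n : ℝ) * relEntropy (tilt θ α) θ + |1 - α| * n * ε) := by
  calc setProb θ S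
      ≤ ∑ x ∈ S, strProb (tilt θ α) x *
          Real.exp (-(n : ℝ) * relEntropy (tilt θ α) θ + |1 - α| * n * ε) := by
        refine Finset.sum_le_sum fun x hx => ?_
        rw [strProb_eq_strProb_tilt_mul_exp hθ α x]
        refine mul_le_mul_of_nonneg_left (Real.exp_le_exp.2 ?_) (strProb_pos (tilt_pos hθ α) x).le
        linarith [neg_abs_one_sub_mul_le_of_mul_le hα (hS x hx)]
    _ = setProb (tilt θ α) S * Real.exp (-(n : ℝ) * relEntropy (tilt θ α) θ + |1 - α| * n * ε) :=
        (Finset.sum_mul _ _ _).symm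
    _ ≤ Real.exp (-(n : ℝ) * relEntropy (tilt θ α) θ + |1 - α| * n * ε) :=
        mul_le_of_le_one_left (Real.exp_nonneg _)
          (setProb_le_one (fun x => (tilt_pos hθ α x).le) (sum_tilt hθ α) S)

lemma exp_mul_setProb_tilt_le_of_forall_abs_le {S : Finset (Fin n → X)}
    (hS : ∀ x ∈ S, |infoDeviation (tilt θ α) θ x| ≤ n * ε) :
    Real.exp (-(n : ℝ) * relEntropy (tilt θ α) θ - |1 - α| * n * ε) * setProb (tilt θ α) S ≤
      setProb θ S := by
  rw [setProb, Finset.mul_sum]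
  refine Finset.sum_le_sum fun x hx => ?_
  rw [strProb_eq_strProb_tilt_mul_exp hθ α x, mul_comm (strProb _ x)]
  refine mul_le_mul_of_nonneg_right (Real.exp_le_exp.2 ?_) (strProb_pos (tilt_pos hθ α) x).le
  have hdev : (1 - α) * infoDeviation (tilt θ α) θ x ≤ |1 - α| * (n * ε) :=
    (le_abs_self _).trans <| (abs_mul _ _).trans_le <|
      mul_le_mul_of_nonneg_left (hS x hx) (abs_nonneg _)
  linarith

end ChangeOfMeasure

theorem tilted_typical_set_prob_bounds [Fintype X] [Nonempty X] (θ : X → ℝ)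
    (hθ : IsCatDist θ) (n : ℕ) (hn : 1 ≤ n) (ε : ℝ) (hε : 0 < ε)
    (α : ℝ) (hα : α < 0 ∨ 1 ≤ α) :
    (1 - crossVarentropy (tilt θ α) θ / (n * ε ^ 2)) *
        Real.exp (-(n : ℝ) * relEntropy (tilt θ α) θ - |1 - α| * n * ε) ≤
      setProb θ (typicalSetA θ α n ε) ∧
    setProb θ (typicalSetA θ α n ε) ≤ setProb θ (setD θ α n ε) ∧
    setProb θ (setD θ α n ε) ≤
      Real.exp (-(n : ℝ) * relEntropy (tilt θ α) θ + |1 - α| * n * ε) ∧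
    1 - Real.exp (-(n : ℝ) * relEntropy (tilt θ α) θ + |1 - α| * n * ε) ≤
      setProb θ (setE θ α n ε) := by
  obtain ⟨hθpos, hθsum⟩ := hθ
  have hα₀ : α ≠ 0 := by rintro rfl; norm_num at hα
  refine ⟨?_, ?_, ?_, ?_⟩
  · calc _ ≤ setProb (tilt θ α) (typicalSetA θ α n ε) *
          Real.exp (-(n : ℝ) * relEntropy (tilt θ α) θ - |1 - α| * n * ε) :=
          mul_le_mul_of_nonneg_right
            (one_sub_crossVarentropy_div_le_setProb_tilt_typicalSetA hθpos α hn hε)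
            (Real.exp_nonneg _)
      _ ≤ setProb θ (typicalSetA θ α n ε) := by
          rw [mul_comm]
          refine exp_mul_setProb_tilt_le_of_forall_abs_le hθpos fun x hx => ?_
          rw [typicalSetA_eq_filter hθpos, Finset.mem_filter] at hx
          exact hx.2.le
  · exact Finset.sum_le_sum_of_subset_of_nonneg (typicalSetA_subset_setD hθpos hα₀ n ε)
      fun x _ _ => (strProb_pos hθpos x).le
  · exact setProb_le_exp_of_forall_mul_le hθpos hα fun x hx => ((mem_setD_iff hθpos α x).1 hx).le
  · have hcompl := setProb_le_exp_of_forall_mul_le hθpos hα (ε := ε)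
      (S := Finset.univ \ setE θ α n ε) fun x hx => by
        have hxE := (mem_setE_iff hθpos α x).not.1 (Finset.mem_sdiff.1 hx).2
        have : 0 ≤ |α| * (n * ε) := by positivity
        linarith [not_lt.1 hxE]
    rw [setProb_univ_sdiff hθsum] at hcompl
    linarith
end
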